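/- arXiv:0805.0681 — 3 statements merged into one kernel-verified Lean document; each statement's English description precedes it below -/
import Mathlib

section
/- With B_r the r-th power sum and C_j the elementary symmetric polynomials in x_1,…,x_n, the recursive determinant identity det(M_r) = ∑_{l=1}^{r-1} (-1)^{l-1} C_l det(M_{r-l}) + (-1)^{r-1} r C_r holds for all r ≥ 2, where M_r is the r×r matrix with first column (C_1, 2C_2, …, rC_r)^T, 1's on the superdiagonal, entries C_{i-j+1} for columns j ≥ 2 (and zeros above the superdiagonal). -/
def esymm {R : Type*} [CommRing R] (n j : ℕ) (x : ℕ → R) : R :=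
  ∑ s ∈ Finset.powersetCard j (Finset.range n), ∏ i ∈ s, x i

def matM {R : Type*} [CommRing R] (n : ℕ) (x : ℕ → R) (r : ℕ) :
    Matrix (Fin r) (Fin r) R :=
  fun i j =>
    if (j : ℕ) = 0 then ((i : ℕ) + 1 : ℕ) * esymm n ((i : ℕ) + 1) x
    else if (i : ℕ) + 1 < (j : ℕ) then 0
    else esymm n ((i : ℕ) + 1 - (j : ℕ)) x

lemma esymm_zero {R : Type*} [CommRing R] (n : ℕ) (x : ℕ → R) : esymm n 0 x = 1 := by
  simp [esymm]

lemma fin_succAbove_val {m : ℕ} (j : Fin (m + 1)) (b : Fin m) :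
    ((j.succAbove b : Fin (m + 1)) : ℕ) = if (b : ℕ) < (j : ℕ) then (b : ℕ) else (b : ℕ) + 1 := by
  rcases lt_or_ge ((b : ℕ) : ℕ) (j : ℕ) with h | h
  · rw [Fin.succAbove_of_castSucc_lt _ _ (by simpa [Fin.lt_def] using h)]
    simp [h]
  · rw [Fin.succAbove_of_le_castSucc _ _ (by simpa [Fin.le_def] using h)]
    simp [Nat.not_lt.2 h]

/-- The minor of `matM n x (m+1)` obtained by deleting the last row and column `j`
equals `det (matM n x j)`. -/
lemma minor_det {R : Type*} [CommRing R] (n : ℕ) (x : ℕ → R) :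
    ∀ (m : ℕ) (j : Fin (m + 1)),
      ((matM n x (m + 1)).submatrix Fin.castSucc j.succAbove).det = (matM n x (j : ℕ)).det := by
  intro m
  induction m with
  | zero =>
    intro j
    have hj : j = 0 := Fin.ext (by omega)
    subst hj
    simp [Matrix.det_fin_zero]
  | succ m ih =>
    intro j
    rcases lt_or_ge ((j : ℕ)) (m + 1) with h | h
    · -- j is not the last index; expand along the last column, which is a unit vector
      set A := (matM n x (m + 2)).submatrix Fin.castSucc j.succAbove with hA
      have hjcol : ((j.succAbove (Fin.last m) : Fin (m + 2)) : ℕ) = m + 1 := by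
        rw [fin_succAbove_val]
        simp [Nat.not_lt.2 (Nat.le_of_lt_succ h)]
      have hcol : ∀ i : Fin (m + 1), A i (Fin.last m) =
          if (i : ℕ) = m then 1 else 0 := by
        intro i
        have hi : (i : ℕ) ≤ m := Nat.le_of_lt_succ i.isLt
        simp only [hA, Matrix.submatrix_apply, matM, Fin.coe_castSucc, hjcol]
        rcases eq_or_lt_of_le hi with h1 | h1
        · simp [h1, esymm_zero]
        · simp [Nat.succ_lt_succ h1, Nat.ne_of_lt h1]
      rw [Matrix.det_succ_column A (Fin.last m)]
      rw [Finset.sum_eq_single (Fin.last m)]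
      · have hAll : A (Fin.last m) (Fin.last m) = 1 := by rw [hcol]; simp
        have hsub : A.submatrix (Fin.last m).succAbove (Fin.last m).succAbove =
            (matM n x (m + 1)).submatrix Fin.castSucc (⟨(j : ℕ), h⟩ : Fin (m + 1)).succAbove := by
          ext a b
          simp only [Fin.succAbove_last, hA, Matrix.submatrix_apply, matM]
          have hv : ((j.succAbove (Fin.castSucc b) : Fin (m + 2)) : ℕ) =
              (((⟨(j : ℕ), h⟩ : Fin (m + 1)).succAbove b : Fin (m + 1)) : ℕ) := by
            rw [fin_succAbove_val, fin_succAbove_val]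
            rfl
          rw [hv]
          rfl
        rw [hAll, hsub, ih]
        have hsgn : ((-1 : R)) ^ (m * 2) = 1 := by rw [pow_mul']; norm_num
        simp [hsgn]
      · intro i _ hi
        have : A i (Fin.last m) = 0 := by
          rw [hcol]
          simp only [ite_eq_right_iff]
          intro hv
          exact absurd (Fin.ext hv : i = Fin.last m) hi
        rw [this]; ring
      · intro h'; exact absurd (Finset.mem_univ _) h'
    · -- j is the last index
      have hj : (j : ℕ) = m + 1 := le_antisymm (Nat.le_of_lt_succ j.isLt) h
      have hjl : j = Fin.last (m + 1) := Fin.ext hj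
      subst hjl
      rw [Fin.succAbove_last]
      congr 1

theorem det_matM_recursion {R : Type*} [CommRing R] (n : ℕ) (x : ℕ → R) (r : ℕ)
    (hr : 2 ≤ r) :
    (matM n x r).det =
      (∑ l ∈ Finset.Ico 1 r, (-1 : R) ^ (l - 1) * esymm n l x * (matM n x (r - l)).det) +
        (-1 : R) ^ (r - 1) * (r : R) * esymm n r x := by
  obtain ⟨m, rfl⟩ : ∃ m, r = m + 1 := ⟨r - 1, by omega⟩
  have e1 : (matM n x (m + 1)).det =
      ∑ j : Fin (m + 1), (-1 : R) ^ (m + (j : ℕ)) *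
        (if (j : ℕ) = 0 then ((m + 1 : ℕ) : R) * esymm n (m + 1) x
          else esymm n (m + 1 - (j : ℕ)) x) * (matM n x (j : ℕ)).det := by
    rw [Matrix.det_succ_row _ (Fin.last m)]
    refine Finset.sum_congr rfl fun j _ => ?_
    rw [Fin.succAbove_last, minor_det]
    congr 2
    simp only [matM, Fin.val_last]
    rcases Nat.eq_zero_or_pos (j : ℕ) with h0 | h0
    · simp [h0]
    · have hlt : ¬ (m + 1 < (j : ℕ)) := by have := j.isLt; omega
      simp [Nat.pos_iff_ne_zero.1 h0, hlt]
  rw [e1, Fin.sum_univ_eq_sum_range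
    (fun i => (-1 : R) ^ (m + i) *
      (if i = 0 then ((m + 1 : ℕ) : R) * esymm n (m + 1) x else esymm n (m + 1 - i) x) *
      (matM n x i).det)]
  rw [Finset.range_eq_Ico, Finset.sum_eq_sum_Ico_succ_bot (Nat.succ_pos m)]
  have h0term : (-1 : R) ^ (m + 0) *
      (if (0 : ℕ) = 0 then ((m + 1 : ℕ) : R) * esymm n (m + 1) x else esymm n (m + 1 - 0) x) *
      (matM n x 0).det = (-1 : R) ^ (m + 1 - 1) * ((m + 1 : ℕ) : R) * esymm n (m + 1) x := by
    simp [Matrix.det_fin_zero]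
    ring
  rw [h0term, add_comm]
  congr 1
  rw [Finset.sum_nbij' (i := fun l => m + 1 - l) (j := fun i => m + 1 - i)
    (s := Finset.Ico 1 (m + 1)) (t := Finset.Ico 1 (m + 1))]
  · intro l hl
    simp only [Finset.mem_Ico] at hl
    simp only [Finset.mem_Ico]; omega
  · intro l hl
    simp only [Finset.mem_Ico] at hl
    simp only [Finset.mem_Ico]; omega
  · intro l hl
    simp only [Finset.mem_Ico] at hl; omega
  · intro l hl
    simp only [Finset.mem_Ico] at hl; omega
  · intro l hl
    simp only [Finset.mem_Ico] at hl
    have h1 : l ≠ 0 := by omega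
    have h2 : m + 1 - (m + 1 - l) = l := by omega
    rw [if_neg h1, h2]
    have hs : (-1 : R) ^ (m + l) = (-1 : R) ^ (m + 1 - l - 1) := by
      have hsq : ((-1 : R) ^ (m + 1 - l - 1)) * ((-1 : R) ^ (m + 1 - l - 1)) = 1 := by
        rw [← pow_add, ← two_mul, pow_mul]; simp
      have hmul : (-1 : R) ^ (m + l) * (-1 : R) ^ (m + 1 - l - 1) = 1 := by
        rw [← pow_add, show m + l + (m + 1 - l - 1) = 2 * m by omega, pow_mul]; simp
      calc (-1 : R) ^ (m + l)
          = (-1 : R) ^ (m + l) * (((-1 : R) ^ (m + 1 - l - 1)) * ((-1 : R) ^ (m + 1 - l - 1))) := by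
            rw [hsq, mul_one]
        _ = ((-1 : R) ^ (m + l) * (-1 : R) ^ (m + 1 - l - 1)) * (-1 : R) ^ (m + 1 - l - 1) := by
            ring
        _ = (-1 : R) ^ (m + 1 - l - 1) := by rw [hmul, one_mul]
    rw [hs]
end

section
/- For nonnegative integers a_1, …, a_n with n ≥ 4, setting c_j = e_j(a_1,…,a_n), the identity ∑_{i=1}^n C(a_i+4, 4) = (1/24)·[c_1^4 + 10c_1^3 − 4c_1^2c_2 + 35c_1^2 − 30c_1c_2 + 4c_1c_3 + 2c_2^2 + 50c_1 − 70c_2 + 30c_3 − 4c_4] + n holds. -/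
theorem Multiset.esymm_cons_succ {R : Type*} [CommSemiring R] (a : R) (s : Multiset R) (j : ℕ) :
    (a ::ₘ s).esymm (j + 1) = s.esymm (j + 1) + a * s.esymm j := by
  simp [Multiset.esymm, Multiset.powersetCard_cons, Multiset.map_map, Multiset.sum_map_mul_left]

theorem Nat.cast_add_four_choose_four {K : Type*} [Field K] [CharZero K] (a : ℕ) :
    ((a + 4).choose 4 : K) = (a + 1) * (a + 2) * (a + 3) * (a + 4) / 24 := by
  rw [Nat.cast_choose_eq_ascPochhammer_div]
  simp only [ascPochhammer_succ_right, ascPochhammer_zero, Polynomial.eval_mul,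
    Polynomial.eval_add, Polynomial.eval_X, Polynomial.eval_one, Polynomial.eval_natCast,
    Nat.factorial]
  push_cast
  ring

open Finset

section Esymm

variable {R : Type*} [CommRing R] (x : ℕ → R)

theorem esymm_eq_multiset_esymm (n j : ℕ) : esymm n j x = ((range n).val.map x).esymm j :=
  (esymm_map_val x (range n) j).symm

@[simp]
theorem esymm_zero_right (n : ℕ) : esymm n 0 x = 1 := by
  simp [esymm]

@[simp]
theorem esymm_zero_succ (j : ℕ) : esymm 0 (j + 1) x = 0 := by
  rw [esymm, range_zero, powersetCard_eq_empty.2 (by simp), sum_empty]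

theorem esymm_succ_succ (n j : ℕ) :
    esymm (n + 1) (j + 1) x = esymm n (j + 1) x + x n * esymm n j x := by
  simp only [esymm_eq_multiset_esymm, range_add_one, insert_val_of_notMem notMem_range_self,
    Multiset.map_cons, Multiset.esymm_cons_succ]

theorem esymm_succ_one (n : ℕ) : esymm (n + 1) 1 x = esymm n 1 x + x n := by
  rw [esymm_succ_succ, esymm_zero_right, mul_one]

theorem sum_range_eq_esymm_one (n : ℕ) : ∑ i ∈ range n, x i = esymm n 1 x := by
  induction n with
  | zero => simp
  | succ n ih => rw [sum_range_succ, ih, esymm_succ_one]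

theorem sum_range_pow_two_eq_esymm (n : ℕ) :
    ∑ i ∈ range n, x i ^ 2 = esymm n 1 x ^ 2 - 2 * esymm n 2 x := by
  induction n with
  | zero => simp
  | succ n ih => rw [sum_range_succ, ih, esymm_succ_one, esymm_succ_succ]; ring

theorem sum_range_pow_three_eq_esymm (n : ℕ) :
    ∑ i ∈ range n, x i ^ 3 =
      esymm n 1 x ^ 3 - 3 * esymm n 1 x * esymm n 2 x + 3 * esymm n 3 x := by
  induction n with
  | zero => simp
  | succ n ih => rw [sum_range_succ, ih, esymm_succ_one, esymm_succ_succ, esymm_succ_succ]; ring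

theorem sum_range_pow_four_eq_esymm (n : ℕ) :
    ∑ i ∈ range n, x i ^ 4 =
      esymm n 1 x ^ 4 - 4 * esymm n 1 x ^ 2 * esymm n 2 x + 2 * esymm n 2 x ^ 2 +
        4 * esymm n 1 x * esymm n 3 x - 4 * esymm n 4 x := by
  induction n with
  | zero => simp
  | succ n ih =>
    rw [sum_range_succ, ih, esymm_succ_one, esymm_succ_succ, esymm_succ_succ, esymm_succ_succ]
    ring

end Esymm

theorem euler_char_P4_general (n : ℕ) (a : ℕ → ℕ) (c : ℕ → ℚ)
    (hc : ∀ j, c j = esymm n j (fun i => (a i : ℚ))) :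
    (∑ i ∈ Finset.range n, ((a i + 4).choose 4 : ℚ)) =
      (1 / 24 : ℚ) *
        (c 1 ^ 4 + 10 * c 1 ^ 3 - 4 * c 1 ^ 2 * c 2 + 35 * c 1 ^ 2 - 30 * c 1 * c 2 +
          4 * c 1 * c 3 + 2 * c 2 ^ 2 + 50 * c 1 - 70 * c 2 + 30 * c 3 - 4 * c 4) + n := by
  have hchoose (m : ℕ) : ((m + 4).choose 4 : ℚ) =
      (1 / 24) * ((m : ℚ) ^ 4 + 10 * m ^ 3 + 35 * m ^ 2 + 50 * m) + 1 := by
    rw [Nat.cast_add_four_choose_four]; ring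
  simp only [hchoose, sum_add_distrib, ← mul_sum, sum_const, card_range, nsmul_one]
  rw [sum_range_pow_four_eq_esymm, sum_range_pow_three_eq_esymm, sum_range_pow_two_eq_esymm,
    sum_range_eq_esymm_one, hc, hc, hc, hc]
  ring

theorem euler_char_P4 (n : ℕ) (hn : 4 ≤ n) (a : ℕ → ℕ) (c : ℕ → ℚ)
    (hc : ∀ j, c j = esymm n j (fun i => (a i : ℚ))) :
    (∑ i ∈ Finset.range n, ((a i + 4).choose 4 : ℚ)) =
      (1 / 24 : ℚ) *
        (c 1 ^ 4 + 10 * c 1 ^ 3 - 4 * c 1 ^ 2 * c 2 + 35 * c 1 ^ 2 - 30 * c 1 * c 2 +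
          4 * c 1 * c 3 + 2 * c 2 ^ 2 + 50 * c 1 - 70 * c 2 + 30 * c 3 - 4 * c 4) + n :=
  euler_char_P4_general n a c hc
end

section
/- For nonnegative integers a_1, …, a_n with n ≥ 5, setting c_j = e_j(a_1,…,a_n), the identity ∑_{i=1}^n C(a_i+5, 5) = (1/120)·[c_1^5 + 15c_1^4 − 5c_1^3c_2 + 85c_1^3 − 60c_1^2c_2 + 5c_1^2c_3 + 5c_1c_2^2 + 225c_1^2 − 255c_1c_2 + 60c_1c_3 − 5c_1c_4 + 30c_2^2 − 5c_2c_3 + 274c_1 − 450c_2 + 255c_3 − 60c_4 + 5c_5] + n holds. -/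
lemma esymm_succ {R : Type*} [CommRing R] (n j : ℕ) (x : ℕ → R) :
    esymm (n + 1) (j + 1) x = esymm n (j + 1) x + x n * esymm n j x := by
  unfold esymm
  rw [Finset.range_add_one, Finset.powersetCard_succ_insert (Finset.notMem_range_self)]
  rw [Finset.sum_union]
  · congr 1
    rw [Finset.sum_image, Finset.mul_sum]
    · refine Finset.sum_congr rfl fun s hs => ?_
      rw [Finset.prod_insert]
      intro hns
      exact Finset.notMem_range_self ((Finset.mem_powersetCard.mp hs).1 hns)
    · intro s hs t ht hst
      have hns : n ∉ s := fun h => Finset.notMem_range_self ((Finset.mem_powersetCard.mp hs).1 h)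
      have hnt : n ∉ t := fun h => Finset.notMem_range_self ((Finset.mem_powersetCard.mp ht).1 h)
      have := congrArg (fun u => Finset.erase u n) hst
      simpa [Finset.erase_insert hns, Finset.erase_insert hnt] using this
  · rw [Finset.disjoint_right]
    intro s hs hs'
    obtain ⟨t, ht, rfl⟩ := Finset.mem_image.mp hs
    exact Finset.notMem_range_self ((Finset.mem_powersetCard.mp hs').1 (Finset.mem_insert_self n t))

lemma key (n : ℕ) (x : ℕ → ℚ) :
    ∑ i ∈ Finset.range n, (x i ^ 5 + 15 * x i ^ 4 + 85 * x i ^ 3 + 225 * x i ^ 2 + 274 * x i) =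
      esymm n 1 x ^ 5 + 15 * esymm n 1 x ^ 4 - 5 * esymm n 1 x ^ 3 * esymm n 2 x +
        85 * esymm n 1 x ^ 3 - 60 * esymm n 1 x ^ 2 * esymm n 2 x +
        5 * esymm n 1 x ^ 2 * esymm n 3 x + 5 * esymm n 1 x * esymm n 2 x ^ 2 +
        225 * esymm n 1 x ^ 2 - 255 * esymm n 1 x * esymm n 2 x +
        60 * esymm n 1 x * esymm n 3 x - 5 * esymm n 1 x * esymm n 4 x +
        30 * esymm n 2 x ^ 2 - 5 * esymm n 2 x * esymm n 3 x + 274 * esymm n 1 x -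
        450 * esymm n 2 x + 255 * esymm n 3 x - 60 * esymm n 4 x + 5 * esymm n 5 x := by
  induction n with
  | zero =>
    have h : ∀ j : ℕ, 0 < j → esymm 0 j x = 0 := fun j hj => by
      unfold esymm
      simp [esymm, Finset.powersetCard_eq_empty.mpr (by simpa using hj : (∅ : Finset ℕ).card < j)]
    simp [h 1, h 2, h 3, h 4, h 5]
  | succ n ih =>
    have e1 : esymm (n + 1) 1 x = esymm n 1 x + x n * esymm n 0 x := esymm_succ n 0 x
    have e2 : esymm (n + 1) 2 x = esymm n 2 x + x n * esymm n 1 x := esymm_succ n 1 x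
    have e3 : esymm (n + 1) 3 x = esymm n 3 x + x n * esymm n 2 x := esymm_succ n 2 x
    have e4 : esymm (n + 1) 4 x = esymm n 4 x + x n * esymm n 3 x := esymm_succ n 3 x
    have e5 : esymm (n + 1) 5 x = esymm n 5 x + x n * esymm n 4 x := esymm_succ n 4 x
    rw [Finset.sum_range_succ, ih, e1, e2, e3, e4, e5, esymm_zero]
    ring

theorem euler_char_P5 (n : ℕ) (hn : 5 ≤ n) (a : ℕ → ℕ) (c : ℕ → ℚ)
    (hc : ∀ j, c j = esymm n j (fun i => (a i : ℚ))) :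
    (∑ i ∈ Finset.range n, ((a i + 5).choose 5 : ℚ)) =
      (1 / 120 : ℚ) *
        (c 1 ^ 5 + 15 * c 1 ^ 4 - 5 * c 1 ^ 3 * c 2 + 85 * c 1 ^ 3 - 60 * c 1 ^ 2 * c 2 +
          5 * c 1 ^ 2 * c 3 + 5 * c 1 * c 2 ^ 2 + 225 * c 1 ^ 2 - 255 * c 1 * c 2 +
          60 * c 1 * c 3 - 5 * c 1 * c 4 + 30 * c 2 ^ 2 - 5 * c 2 * c 3 + 274 * c 1 -
          450 * c 2 + 255 * c 3 - 60 * c 4 + 5 * c 5) + n := by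
  have hch : ∀ i, ((a i + 5).choose 5 : ℚ) =
      (1 / 120 : ℚ) * ((a i : ℚ) ^ 5 + 15 * (a i : ℚ) ^ 4 + 85 * (a i : ℚ) ^ 3 +
        225 * (a i : ℚ) ^ 2 + 274 * (a i : ℚ)) + 1 := by
    intro i
    have h : (120 : ℕ) * (a i + 5).choose 5 =
        (a i + 1) * (a i + 2) * (a i + 3) * (a i + 4) * (a i + 5) := by
      have h1 := Nat.descFactorial_eq_factorial_mul_choose (a i + 5) 5
      have h2 : (a i + 5).descFactorial 5 =
          (a i + 1) * (a i + 2) * (a i + 3) * (a i + 4) * (a i + 5) := by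
        simp [Nat.descFactorial, Nat.add_sub_cancel]
        ring
      rw [h2, show (Nat.factorial 5) = 120 from rfl] at h1
      omega
    have h' : (120 : ℚ) * ((a i + 5).choose 5 : ℚ) =
        ((a i : ℚ) + 1) * ((a i : ℚ) + 2) * ((a i : ℚ) + 3) * ((a i : ℚ) + 4) *
          ((a i : ℚ) + 5) := by
      exact_mod_cast congrArg (Nat.cast : ℕ → ℚ) h
    linear_combination h' / 120
  rw [Finset.sum_congr rfl fun i _ => hch i, Finset.sum_add_distrib, Finset.sum_const,
    ← Finset.mul_sum, key n (fun i => (a i : ℚ))]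
  simp only [hc, Finset.card_range]
  push_cast
  ring
end
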